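/- arXiv:1304.3969 — 2 statements merged into one kernel-verified Lean document; each statement's English description precedes it below -/
import Mathlib

section
/- For all real numbers t₀ and s, G'(t₀)·exp(−|s|) ≤ G'(t₀ + s) ≤ G'(t₀)·exp(|s|). -/
/-- The logistic link function `G(t) = exp t / (1 + exp t)`. -/
noncomputable def logistic (t : ℝ) : ℝ := Real.exp t / (1 + Real.exp t)

/-- The derivative of the logistic link function: `G'(t) = G(t)·(1 − G(t))`. -/
noncomputable def logisticDeriv (t : ℝ) : ℝ := logistic t * (1 - logistic t)

lemma logisticDeriv_eq (t : ℝ) :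
    logisticDeriv t = Real.exp t / (1 + Real.exp t) ^ 2 := by
  have h : (0:ℝ) < 1 + Real.exp t := by positivity
  unfold logisticDeriv logistic
  field_simp
  ring

lemma logisticDeriv_aux (t s : ℝ) :
    logisticDeriv (t + s) ≤ logisticDeriv t * Real.exp |s| := by
  rw [logisticDeriv_eq, logisticDeriv_eq]
  rw [div_mul_eq_mul_div, div_le_div_iff₀ (by positivity) (by positivity)]
  have hadd : Real.exp (t + s) = Real.exp t * Real.exp s := Real.exp_add t s
  have hpt : (0:ℝ) < Real.exp t := Real.exp_pos t
  have hps : (0:ℝ) < Real.exp s := Real.exp_pos s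
  rcases abs_cases s with ⟨hs, hs0⟩ | ⟨hs, hs0⟩
  · rw [hs, ← hadd]
    have h1 : Real.exp t ≤ Real.exp (t + s) := Real.exp_le_exp.2 (by linarith)
    gcongr
  · rw [hs]
    have h1 : Real.exp s ≤ 1 := Real.exp_le_one_iff.2 (by linarith)
    have key : Real.exp s * (1 + Real.exp t) ≤ 1 + Real.exp (t + s) := by nlinarith
    have key2 := mul_le_mul key key (by positivity) (by positivity)
    have h3 : Real.exp t * Real.exp (-s) * (1 + Real.exp (t + s)) ^ 2
        = (Real.exp t * (1 + Real.exp (t + s)) ^ 2) / Real.exp s := by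
      rw [Real.exp_neg]; field_simp
    rw [h3, le_div_iff₀ hps]
    nlinarith [mul_le_mul_of_nonneg_left key2 hpt.le, hadd]

/-- Comparison of the logistic derivative at nearby points: for all `t₀ s : ℝ`,
`G'(t₀)·exp(−|s|) ≤ G'(t₀ + s) ≤ G'(t₀)·exp |s|`. -/
theorem logisticDeriv_comparison (t₀ s : ℝ) :
    logisticDeriv t₀ * Real.exp (-|s|) ≤ logisticDeriv (t₀ + s) ∧
      logisticDeriv (t₀ + s) ≤ logisticDeriv t₀ * Real.exp |s| := by
  refine ⟨?_, logisticDeriv_aux t₀ s⟩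
  have h := logisticDeriv_aux (t₀ + s) (-s)
  simp only [add_neg_cancel_right, abs_neg] at h
  have hpos : (0:ℝ) < Real.exp (-|s|) := Real.exp_pos _
  have : Real.exp |s| * Real.exp (-|s|) = 1 := by rw [← Real.exp_add]; simp
  calc logisticDeriv t₀ * Real.exp (-|s|)
      ≤ (logisticDeriv (t₀ + s) * Real.exp |s|) * Real.exp (-|s|) :=
        mul_le_mul_of_nonneg_right h hpos.le
    _ = logisticDeriv (t₀ + s) := by rw [mul_assoc, this, mul_one]
end

section
/- Let A ⊆ ℝ^p be star-shaped about the origin (t·δ ∈ A whenever δ ∈ A and t ∈ [0,1]) and let q̄ > 0 satisfy q̄·(1/n)∑_{i=1}^n w_i·|x_i'δ|³ ≤ ((1/n)∑_{i=1}^n w_i·(x_i'δ)²)^{3/2} for every δ ∈ A. Then for every δ ∈ A, Λ(η₀ + δ) − Λ(η₀) − ∇Λ(η₀)'δ ≥ min{ (1/3)·‖√w_i·x_i'δ‖²_{2,n}, (q̄/3)·‖√w_i·x_i'δ‖_{2,n} }. -/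
open Finset

/-- Inner product `x_i'η` of the `i`-th design vector with `η`. -/
def xdot {n p : ℕ} (x : Fin n → Fin p → ℝ) (η : Fin p → ℝ) (i : Fin n) : ℝ :=
  ∑ j, x i j * η j

/-- Average logistic negative log-likelihood
`Λ(η) = (1/n)∑ᵢ [log(1+exp(x_i'η)) − y_i·(x_i'η)]`. -/
noncomputable def Lam {n p : ℕ} (x : Fin n → Fin p → ℝ) (y : Fin n → ℝ)
    (η : Fin p → ℝ) : ℝ :=
  (1 / (n : ℝ)) * ∑ i, (Real.log (1 + Real.exp (xdot x η i)) - y i * xdot x η i)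

/-- Gradient of `Λ`: `∇Λ(η) = (1/n)∑ᵢ (G(x_i'η) − y_i)·x_i`. -/
noncomputable def gradLam {n p : ℕ} (x : Fin n → Fin p → ℝ) (y : Fin n → ℝ)
    (η : Fin p → ℝ) (j : Fin p) : ℝ :=
  (1 / (n : ℝ)) * ∑ i, (logistic (xdot x η i) - y i) * x i j

/-- Sup-norm `‖∇Λ(η)‖_∞` of the gradient of `Λ`. -/
noncomputable def gradLamSup {n p : ℕ} (x : Fin n → Fin p → ℝ) (y : Fin n → ℝ)
    (η : Fin p → ℝ) : ℝ :=
  ⨆ j : Fin p, |gradLam x y η j|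

/-- The logistic weights `w_i = G(x_i'η₀)·(1 − G(x_i'η₀))`. -/
noncomputable def wgt {n p : ℕ} (x : Fin n → Fin p → ℝ) (η₀ : Fin p → ℝ) (i : Fin n) : ℝ :=
  logistic (xdot x η₀ i) * (1 - logistic (xdot x η₀ i))

/-- Weighted prediction norm `‖√w_i·x_i'δ‖_{2,n} = ((1/n)∑ᵢ w_i (x_i'δ)²)^{1/2}`. -/
noncomputable def predNorm {n p : ℕ} (x : Fin n → Fin p → ℝ) (w : Fin n → ℝ)
    (δ : Fin p → ℝ) : ℝ :=
  Real.sqrt ((1 / (n : ℝ)) * ∑ i, w i * xdot x δ i ^ 2)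

/-- Support of a coefficient vector. -/
noncomputable def supp {p : ℕ} (η : Fin p → ℝ) : Finset (Fin p) :=
  Finset.univ.filter (fun j => η j ≠ 0)

/-- ℓ1 norm of a vector in `ℝ^p`. -/
def l1norm {p : ℕ} (δ : Fin p → ℝ) : ℝ := ∑ j, |δ j|

/-- The restricted cone `Δ_c̄ = {δ : ‖δ_{T^c}‖₁ ≤ c̄·‖δ_T‖₁}` for a support set `T`. -/
noncomputable def inCone {p : ℕ} (T : Finset (Fin p)) (cbar : ℝ) (δ : Fin p → ℝ) : Prop :=
  ∑ j ∈ Tᶜ, |δ j| ≤ cbar * ∑ j ∈ T, |δ j|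

/-
The excess `Λ(η₀+δ) − Λ(η₀) − ∇Λ(η₀)'δ` is the average of the Bregman remainders
`B(a, u) = ℓ(a+u) − ℓ(a) − ℓ'(a)u` of the softplus function `ℓ(t) = log(1+eᵗ)` at
`a = x_i'η₀`, `u = x_i'δ`. Its curvature `w = ℓ''` is self-concordant,
`w(a+u) ≥ e^{-|u|} w(a)`, and integrating twice gives `B(a, u) ≥ w(a)(u²/2 − |u|³/6)`;
averaging, the excess is at least `r²/2 − S₃/6`, where `r = ‖√w_i x_i'δ‖_{2,n}` and
`q̄ S₃ ≤ r³`. For `r ≤ q̄` this is at least `r²/3`. For `r > q̄`, convexity of `ℓ` makes the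
excess along the ray through `δ` grow at least linearly, so the bound at `(q̄/r)δ`, which is
`q̄²/3`, scales up to `q̄r/3`.
-/

open Real Set

lemma logistic_eq_sigmoid : logistic = sigmoid := by
  funext t
  rw [logistic, sigmoid_def, exp_neg]
  field_simp
  ring

noncomputable def softplus (t : ℝ) : ℝ := log (1 + exp t)

lemma hasDerivAt_softplus (t : ℝ) : HasDerivAt softplus (sigmoid t) t := by
  have h := ((hasDerivAt_exp t).const_add 1).log (by positivity)
  rwa [← logistic, logistic_eq_sigmoid] at h

lemma softplus_neg (t : ℝ) : softplus (-t) = softplus t - t := by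
  have h : 1 + exp (-t) = (1 + exp t) / exp t := by
    rw [exp_neg]
    field_simp
    ring
  rw [softplus, softplus, h, log_div (by positivity) (exp_ne_zero t), log_exp]

lemma convexOn_softplus : ConvexOn ℝ univ softplus := by
  refine Monotone.convexOn_univ_of_deriv (fun t => (hasDerivAt_softplus t).differentiableAt) ?_
  rw [show deriv softplus = sigmoid from funext fun t => (hasDerivAt_softplus t).deriv]
  exact sigmoid_monotone

lemma sigmoid_mul_one_sub_sigmoid (t : ℝ) :
    sigmoid t * (1 - sigmoid t) = ((1 + exp (-t)) * (1 + exp t))⁻¹ := by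
  rw [← sigmoid_neg, sigmoid_def, sigmoid_def, neg_neg, mul_inv]

lemma exp_neg_mul_sigmoid_weight_le (a : ℝ) {u : ℝ} (hu : 0 ≤ u) :
    exp (-u) * (sigmoid a * (1 - sigmoid a)) ≤ sigmoid (a + u) * (1 - sigmoid (a + u)) := by
  rw [sigmoid_mul_one_sub_sigmoid, sigmoid_mul_one_sub_sigmoid, ← div_eq_mul_inv, inv_eq_one_div,
    div_le_div_iff₀ (by positivity) (by positivity), one_mul]
  have h₁ : 1 + exp (-(a + u)) ≤ 1 + exp (-a) := by gcongr; linarith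
  have h₂ : exp (-u) * (1 + exp (a + u)) = exp (-u) + exp a := by
    rw [mul_add, ← exp_add, show -u + (a + u) = a by ring, mul_one]
  have h₃ : exp (-u) ≤ 1 := exp_le_one_iff.mpr (by linarith)
  calc exp (-u) * ((1 + exp (-(a + u))) * (1 + exp (a + u)))
      = (1 + exp (-(a + u))) * (exp (-u) * (1 + exp (a + u))) := by ring
    _ ≤ (1 + exp (-a)) * (1 + exp a) := by rw [h₂]; gcongr

lemma sigmoid_weight_mul_one_sub_le (a : ℝ) {u : ℝ} (hu : 0 ≤ u) :
    sigmoid a * (1 - sigmoid a) * (1 - u) ≤ sigmoid (a + u) * (1 - sigmoid (a + u)) := by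
  have hw : 0 ≤ sigmoid a * (1 - sigmoid a) := by
    rw [sigmoid_mul_one_sub_sigmoid]; positivity
  calc sigmoid a * (1 - sigmoid a) * (1 - u) ≤ exp (-u) * (sigmoid a * (1 - sigmoid a)) := by
        rw [mul_comm]; gcongr; linarith [add_one_le_exp (-u)]
    _ ≤ _ := exp_neg_mul_sigmoid_weight_le a hu

lemma le_of_hasDerivAt_le {f g f' g' : ℝ → ℝ} {a b : ℝ} (hf : ∀ v, HasDerivAt f (f' v) v)
    (hg : ∀ v, HasDerivAt g (g' v) v) (ha : f a ≤ g a) (hd : ∀ v, a ≤ v → f' v ≤ g' v)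
    (hab : a ≤ b) : f b ≤ g b :=
  image_le_of_deriv_right_le_deriv_boundary
    (fun v _ => (hf v).continuousAt.continuousWithinAt) (fun v _ => (hf v).hasDerivWithinAt) ha
    (fun v _ => (hg v).continuousAt.continuousWithinAt) (fun v _ => (hg v).hasDerivWithinAt)
    (fun v hv => hd v hv.1) ⟨hab, le_rfl⟩

lemma sigmoid_weight_mul_le_sigmoid_add_sub (a : ℝ) {u : ℝ} (hu : 0 ≤ u) :
    sigmoid a * (1 - sigmoid a) * (u - u ^ 2 / 2) ≤ sigmoid (a + u) - sigmoid a := by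
  refine le_of_hasDerivAt_le (f := fun v => sigmoid a * (1 - sigmoid a) * (v - v ^ 2 / 2))
    (g := fun v => sigmoid (a + v) - sigmoid a)
    (f' := fun v => sigmoid a * (1 - sigmoid a) * (1 - v))
    (g' := fun v => sigmoid (a + v) * (1 - sigmoid (a + v))) (fun v => ?_) (fun v => ?_)
    (by simp) (fun v hv => sigmoid_weight_mul_one_sub_le a hv) hu
  · exact (((hasDerivAt_id v).sub ((hasDerivAt_pow 2 v).div_const 2)).const_mul _).congr_deriv
      (by push_cast; ring)
  · simpa using ((hasDerivAt_sigmoid (a + v)).comp v ((hasDerivAt_id v).const_add a)).sub_const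
      (sigmoid a)

noncomputable def softplusBregman (a u : ℝ) : ℝ := softplus (a + u) - softplus a - sigmoid a * u

lemma sigmoid_weight_mul_le_softplusBregman_of_nonneg (a : ℝ) {u : ℝ} (hu : 0 ≤ u) :
    sigmoid a * (1 - sigmoid a) * (u ^ 2 / 2 - u ^ 3 / 6) ≤ softplusBregman a u := by
  refine le_of_hasDerivAt_le (f := fun v => sigmoid a * (1 - sigmoid a) * (v ^ 2 / 2 - v ^ 3 / 6))
    (g := fun v => softplus (a + v) - softplus a - sigmoid a * v)
    (f' := fun v => sigmoid a * (1 - sigmoid a) * (v - v ^ 2 / 2))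
    (g' := fun v => sigmoid (a + v) - sigmoid a) (fun v => ?_) (fun v => ?_)
    (by simp) (fun v hv => sigmoid_weight_mul_le_sigmoid_add_sub a hv) hu
  · exact ((((hasDerivAt_pow 2 v).div_const 2).sub ((hasDerivAt_pow 3 v).div_const 6)).const_mul
      _).congr_deriv (by push_cast; ring)
  · simpa using (((hasDerivAt_softplus (a + v)).comp v ((hasDerivAt_id v).const_add a)).sub_const
      (softplus a)).fun_sub ((hasDerivAt_id v).const_mul (sigmoid a))

lemma softplusBregman_neg_neg (a u : ℝ) : softplusBregman (-a) (-u) = softplusBregman a u := by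
  rw [softplusBregman, softplusBregman, ← neg_add, softplus_neg, softplus_neg, sigmoid_neg]
  ring

lemma sigmoid_weight_mul_le_softplusBregman (a u : ℝ) :
    sigmoid a * (1 - sigmoid a) * (u ^ 2 / 2 - |u| ^ 3 / 6) ≤ softplusBregman a u := by
  rcases le_total 0 u with hu | hu
  · rw [abs_of_nonneg hu]
    exact sigmoid_weight_mul_le_softplusBregman_of_nonneg a hu
  · have h := sigmoid_weight_mul_le_softplusBregman_of_nonneg (-a) (neg_nonneg.mpr hu)
    rw [softplusBregman_neg_neg, sigmoid_neg] at h
    rw [abs_of_nonpos hu]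
    linarith

lemma ConvexOn.sub_le_mul_sub {f : ℝ → ℝ} (hf : ConvexOn ℝ univ f) (a u : ℝ) {t : ℝ}
    (ht₀ : 0 ≤ t) (ht₁ : t ≤ 1) : f (a + t * u) - f a ≤ t * (f (a + u) - f a) := by
  have h := hf.2 (mem_univ (a + u)) (mem_univ a) ht₀ (sub_nonneg.mpr ht₁) (by ring)
  simp only [smul_eq_mul] at h
  rw [show t * (a + u) + (1 - t) * a = a + t * u by ring] at h
  linarith

lemma softplusBregman_mul_le (a u : ℝ) {t : ℝ} (ht₀ : 0 ≤ t) (ht₁ : t ≤ 1) :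
    softplusBregman a (t * u) ≤ t * softplusBregman a u := by
  have h := convexOn_softplus.sub_le_mul_sub a u ht₀ ht₁
  rw [softplusBregman, softplusBregman]
  linarith

lemma sigmoid_weight_mul_le_mul_softplusBregman (a u : ℝ) {t : ℝ} (ht₀ : 0 ≤ t)
    (ht₁ : t ≤ 1) :
    sigmoid a * (1 - sigmoid a) * ((t * u) ^ 2 / 2 - |t * u| ^ 3 / 6)
      ≤ t * softplusBregman a u :=
  (sigmoid_weight_mul_le_softplusBregman a (t * u)).trans (softplusBregman_mul_le a u ht₀ ht₁)

section Design

variable {n p : ℕ} (x : Fin n → Fin p → ℝ)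

lemma xdot_add (η δ : Fin p → ℝ) (i : Fin n) :
    xdot x (η + δ) i = xdot x η i + xdot x δ i := by
  simp only [xdot, Pi.add_apply, mul_add, Finset.sum_add_distrib]

lemma xdot_smul (t : ℝ) (δ : Fin p → ℝ) (i : Fin n) :
    xdot x (t • δ) i = t * xdot x δ i := by
  simp only [xdot, Pi.smul_apply, smul_eq_mul, Finset.mul_sum]
  exact Finset.sum_congr rfl fun j _ => by ring

lemma wgt_eq_sigmoid (η : Fin p → ℝ) (i : Fin n) :
    wgt x η i = sigmoid (xdot x η i) * (1 - sigmoid (xdot x η i)) := by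
  rw [wgt, logistic_eq_sigmoid]

lemma wgt_nonneg (η : Fin p → ℝ) (i : Fin n) : 0 ≤ wgt x η i := by
  rw [wgt_eq_sigmoid, sigmoid_mul_one_sub_sigmoid]
  positivity

lemma mean_weighted_sq_nonneg {w : Fin n → ℝ} (hw : ∀ i, 0 ≤ w i) (δ : Fin p → ℝ) :
    0 ≤ 1 / (n : ℝ) * ∑ i, w i * xdot x δ i ^ 2 :=
  mul_nonneg (by positivity) (Finset.sum_nonneg fun i _ => mul_nonneg (hw i) (sq_nonneg _))

lemma predNorm_sq {w : Fin n → ℝ} (hw : ∀ i, 0 ≤ w i) (δ : Fin p → ℝ) :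
    predNorm x w δ ^ 2 = 1 / (n : ℝ) * ∑ i, w i * xdot x δ i ^ 2 :=
  sq_sqrt (mean_weighted_sq_nonneg x hw δ)

lemma predNorm_pow_three {w : Fin n → ℝ} (hw : ∀ i, 0 ≤ w i) (δ : Fin p → ℝ) :
    predNorm x w δ ^ 3 = (1 / (n : ℝ) * ∑ i, w i * xdot x δ i ^ 2) ^ ((3 : ℝ) / 2) := by
  rw [predNorm, sqrt_eq_rpow, ← rpow_natCast, ← rpow_mul (mean_weighted_sq_nonneg x hw δ)]
  norm_num

lemma sum_gradLam_mul (y : Fin n → ℝ) (η δ : Fin p → ℝ) :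
    ∑ j, gradLam x y η j * δ j
      = 1 / (n : ℝ) * ∑ i, (sigmoid (xdot x η i) - y i) * xdot x δ i := by
  simp only [gradLam, xdot, logistic_eq_sigmoid, Finset.mul_sum, Finset.sum_mul]
  rw [Finset.sum_comm]
  exact Finset.sum_congr rfl fun i _ => Finset.sum_congr rfl fun j _ => by ring

lemma Lam_add_sub_sub_eq (y : Fin n → ℝ) (η δ : Fin p → ℝ) :
    Lam x y (η + δ) - Lam x y η - ∑ j, gradLam x y η j * δ j
      = 1 / (n : ℝ) * ∑ i, softplusBregman (xdot x η i) (xdot x δ i) := by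
  rw [sum_gradLam_mul, Lam, Lam, ← mul_sub, ← mul_sub, ← Finset.sum_sub_distrib,
    ← Finset.sum_sub_distrib]
  congr 1
  refine Finset.sum_congr rfl fun i _ => ?_
  rw [xdot_add, softplusBregman, softplus, softplus]
  ring

lemma cubic_minorant_le_mul_Lam_add_sub_sub (y : Fin n → ℝ) (η δ : Fin p → ℝ) {t : ℝ}
    (ht₀ : 0 ≤ t) (ht₁ : t ≤ 1) :
    t ^ 2 * (1 / (n : ℝ) * ∑ i, wgt x η i * xdot x δ i ^ 2) / 2
        - t ^ 3 * (1 / (n : ℝ) * ∑ i, wgt x η i * |xdot x δ i| ^ 3) / 6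
      ≤ t * (Lam x y (η + δ) - Lam x y η - ∑ j, gradLam x y η j * δ j) := by
  rw [Lam_add_sub_sub_eq]
  calc t ^ 2 * (1 / (n : ℝ) * ∑ i, wgt x η i * xdot x δ i ^ 2) / 2
        - t ^ 3 * (1 / (n : ℝ) * ∑ i, wgt x η i * |xdot x δ i| ^ 3) / 6
      = 1 / (n : ℝ) * ∑ i,
          wgt x η i * ((t * xdot x δ i) ^ 2 / 2 - |t * xdot x δ i| ^ 3 / 6) := by
        simp only [abs_mul, abs_of_nonneg ht₀, Finset.mul_sum, Finset.sum_div,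
          ← Finset.sum_sub_distrib]
        exact Finset.sum_congr rfl fun i _ => by ring
    _ ≤ 1 / (n : ℝ) * ∑ i, t * softplusBregman (xdot x η i) (xdot x δ i) := by
        refine mul_le_mul_of_nonneg_left (Finset.sum_le_sum fun i _ => ?_) (by positivity)
        rw [wgt_eq_sigmoid]
        exact sigmoid_weight_mul_le_mul_softplusBregman _ _ ht₀ ht₁
    _ = t * (1 / (n : ℝ) * ∑ i, softplusBregman (xdot x η i) (xdot x δ i)) := by
        rw [← Finset.mul_sum]; ring

end Design

lemma min_le_of_forall_cubic_le {q r s c : ℝ} (hq : 0 < q) (hqs : q * s ≤ r ^ 3)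
    (h : ∀ t ∈ Icc (0 : ℝ) 1, t ^ 2 * r ^ 2 / 2 - t ^ 3 * s / 6 ≤ t * c) :
    min (1 / 3 * r ^ 2) (q / 3 * r) ≤ c := by
  rcases le_or_gt r q with hrq | hqr
  · have hs : s ≤ r ^ 2 := by
      have : q * s ≤ q * r ^ 2 := by nlinarith [mul_le_mul_of_nonneg_right hrq (sq_nonneg r)]
      exact le_of_mul_le_mul_left this hq
    have h₁ := h 1 ⟨zero_le_one, le_rfl⟩
    refine (min_le_left _ _).trans ?_
    linarith
  · have hr₀ : 0 < r := hq.trans hqr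
    -- at `t = q / r` the quadratic term is `q² / 2` and the cubic one at most `q² / 6`
    have ht := h (q / r) ⟨by positivity, (div_le_one hr₀).mpr hqr.le⟩
    have hcubic : (q / r) ^ 3 * s ≤ q ^ 2 := by
      rw [div_pow, div_mul_eq_mul_div, div_le_iff₀ (by positivity)]
      nlinarith [mul_le_mul_of_nonneg_left hqs (sq_nonneg q)]
    rw [div_pow, div_mul_cancel₀ _ (by positivity)] at ht
    refine (min_le_right _ _).trans ?_
    rw [← mul_le_mul_iff_of_pos_left (div_pos hq hr₀)]
    have : q / r * (q / 3 * r) = q ^ 2 / 3 := by field_simp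
    linarith

theorem minoration_lemma_general {n p : ℕ}
    (x : Fin n → Fin p → ℝ) (y : Fin n → ℝ)
    (η₀ : Fin p → ℝ)
    (A : Set (Fin p → ℝ))
    (qbar : ℝ) (hqbar : 0 < qbar)
    (hq : ∀ δ ∈ A,
      qbar * ((1 / (n : ℝ)) * ∑ i, wgt x η₀ i * |xdot x δ i| ^ 3)
        ≤ ((1 / (n : ℝ)) * ∑ i, wgt x η₀ i * xdot x δ i ^ 2) ^ ((3 : ℝ) / 2)) :
    ∀ δ ∈ A,
      min ((1 / 3) * predNorm x (wgt x η₀) δ ^ 2)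
          ((qbar / 3) * predNorm x (wgt x η₀) δ)
        ≤ Lam x y (η₀ + δ) - Lam x y η₀ - ∑ j, gradLam x y η₀ j * δ j := by
  intro δ hδ
  have hw := wgt_nonneg x η₀
  have hqs := hq δ hδ
  rw [← predNorm_pow_three x hw] at hqs
  refine min_le_of_forall_cubic_le hqbar hqs fun t ht => ?_
  rw [predNorm_sq x hw]
  exact cubic_minorant_le_mul_Lam_add_sub_sub x y η₀ δ ht.1 ht.2

/-- Minoration Lemma: if `A` is star-shaped about the origin and the nonlinear impact
coefficient bound `q̄·(1/n)∑ᵢ w_i|x_i'δ|³ ≤ ((1/n)∑ᵢ w_i (x_i'δ)²)^{3/2}` holds on `A`,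
then for every `δ ∈ A`,
`Λ(η₀+δ) − Λ(η₀) − ∇Λ(η₀)'δ ≥ min{(1/3)‖√w_i x_i'δ‖²_{2,n}, (q̄/3)‖√w_i x_i'δ‖_{2,n}}`. -/
theorem minoration_lemma {n p : ℕ} (hn : 0 < n) (hp : 0 < p)
    (x : Fin n → Fin p → ℝ) (y : Fin n → ℝ) (hy : ∀ i, y i = 0 ∨ y i = 1)
    (η₀ : Fin p → ℝ)
    (A : Set (Fin p → ℝ))
    (hA : ∀ δ ∈ A, ∀ t ∈ Set.Icc (0 : ℝ) 1, t • δ ∈ A)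
    (qbar : ℝ) (hqbar : 0 < qbar)
    (hq : ∀ δ ∈ A,
      qbar * ((1 / (n : ℝ)) * ∑ i, wgt x η₀ i * |xdot x δ i| ^ 3)
        ≤ ((1 / (n : ℝ)) * ∑ i, wgt x η₀ i * xdot x δ i ^ 2) ^ ((3 : ℝ) / 2)) :
    ∀ δ ∈ A,
      min ((1 / 3) * predNorm x (wgt x η₀) δ ^ 2)
          ((qbar / 3) * predNorm x (wgt x η₀) δ)
        ≤ Lam x y (η₀ + δ) - Lam x y η₀ - ∑ j, gradLam x y η₀ j * δ j :=
  minoration_lemma_general x y η₀ A qbar hqbar hq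
end
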